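/- Let G be a finite group acting by ring automorphisms on a commutative Noetherian ring A with |G| invertible in A. Then the invariant subring A^G is Noetherian. -/

import Mathlib

/-!
The Reynolds operator `a ↦ |G|⁻¹ ∑ g • a` is an `A^G`-linear retraction of `A` onto `A^G`.
Applying it to `x = ∑ aᵢ rᵢ` with `rᵢ ∈ I` shows `(I · A) ∩ A^G = I` for every ideal `I` of `A^G`,
so `I ↦ I · A` embeds the ideals of `A^G` into those of `A` and the ascending chain condition
descends.
-/

/-- The subring of `G`-invariant elements of `A`. -/
def fixedSubring (G A : Type*) [Monoid G] [CommRing A] [MulSemiringAction G A] : Subring A where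
  carrier := {a | ∀ g : G, g • a = a}
  mul_mem' := by intro a b ha hb g; rw [smul_mul', ha g, hb g]
  one_mem' := fun g => smul_one g
  add_mem' := by intro a b ha hb g; rw [smul_add, ha g, hb g]
  zero_mem' := fun g => smul_zero g
  neg_mem' := by intro a ha g; rw [smul_neg, ha g]

section Retraction

variable {R S : Type*} [CommRing R] [CommRing S] [Algebra R S]

theorem Ideal.comap_map_eq_self_of_retraction (ρ : S →ₗ[R] R)
    (hρ : ∀ r, ρ (algebraMap R S r) = r) (I : Ideal R) :
    (I.map (algebraMap R S)).comap (algebraMap R S) = I := by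
  refine le_antisymm (fun x hx => ?_) Ideal.le_comap_map
  have hρI : (I • ⊤ : Submodule R S).map ρ ≤ I :=
    Submodule.map_le_iff_le_comap.mpr <| Submodule.smul_le.mpr fun r hr s _ => by
      simpa using I.mul_mem_right (ρ s) hr
  rw [← hρ x]
  exact hρI ⟨_, by rwa [Ideal.smul_top_eq_map], rfl⟩

theorem isNoetherianRing_of_retraction [IsNoetherianRing S] (ρ : S →ₗ[R] R)
    (hρ : ∀ r, ρ (algebraMap R S r) = r) : IsNoetherianRing R := by
  have hinj : Function.Injective (Ideal.map (algebraMap R S) : Ideal R → Ideal S) :=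
    Function.LeftInverse.injective (Ideal.comap_map_eq_self_of_retraction ρ hρ)
  have hmono : Monotone (Ideal.map (algebraMap R S) : Ideal R → Ideal S) :=
    fun _ _ => Ideal.map_mono
  exact isNoetherian_iff'.mpr (hmono.strictMono_of_injective hinj).wellFoundedGT

end Retraction

theorem smul_invOf_of_smul_eq {M A : Type*} [Monoid M] [Semiring A] [MulSemiringAction M A]
    (g : M) (x : A) [Invertible x] (hx : g • x = x) : g • ⅟x = ⅟x := by
  refine (invOf_eq_right_inv ?_).symm
  calc x * g • ⅟x = g • x * g • ⅟x := by rw [hx]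
    _ = 1 := by rw [← smul_mul', mul_invOf_self, smul_one]

section Reynolds

variable (G A : Type*) [Group G] [Fintype G] [CommRing A] [MulSemiringAction G A]

variable {A} in
theorem sum_smul_mem_fixedSubring (a : A) : ∑ g : G, g • a ∈ fixedSubring G A := fun h => by
  rw [Finset.smul_sum]
  exact Fintype.sum_equiv (Equiv.mulLeft h) _ _ fun g => (mul_smul h g a).symm

variable [Invertible (Fintype.card G : A)]

theorem invOf_card_mem_fixedSubring : ⅟(Fintype.card G : A) ∈ fixedSubring G A := fun g =>
  smul_invOf_of_smul_eq g _ (map_natCast (MulSemiringAction.toRingHom G A g) _)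

noncomputable def reynolds : A →ₗ[fixedSubring G A] fixedSubring G A where
  toFun a := ⟨⅟(Fintype.card G : A) * ∑ g : G, g • a,
    mul_mem (invOf_card_mem_fixedSubring G A) (sum_smul_mem_fixedSubring G a)⟩
  map_add' a b := Subtype.ext <| by simp [smul_add, Finset.sum_add_distrib, mul_add]
  map_smul' r a := Subtype.ext <| by
    simp only [Subring.smul_def, smul_eq_mul, smul_mul', r.2 _, RingHom.id_apply,
      Subring.coe_mul, ← Finset.mul_sum]
    ring

theorem reynolds_algebraMap (r : fixedSubring G A) :
    reynolds G A (algebraMap (fixedSubring G A) A r) = r := Subtype.ext <| by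
  change ⅟(Fintype.card G : A) * ∑ g : G, g • (r : A) = r
  rw [Fintype.sum_congr _ _ r.2, Finset.sum_const, Finset.card_univ, nsmul_eq_mul,
    invOf_mul_cancel_left]

end Reynolds

/-- If `A` is Noetherian and `|G|` is invertible in `A`, then `A^G` is Noetherian. -/
theorem invariant_subring_noetherian (G A : Type*) [Group G] [Fintype G] [CommRing A]
    [MulSemiringAction G A] [Invertible ((Fintype.card G : A))] [IsNoetherianRing A] :
    IsNoetherianRing (fixedSubring G A) :=
  isNoetherianRing_of_retraction (reynolds G A) (reynolds_algebraMap G A)
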